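/- arXiv:2205.14678 — 4 statements merged into one kernel-verified Lean document; each statement's English description precedes it below -/
import Mathlib

section
/- Let V_1 and V_2 be distinct subsets of {1,...,m} with V_1 ∩ V_2 ≠ ∅, V_1 ⊄ V_2 and V_2 ⊄ V_1, and set t_k = ∏_{i ∈ V_k} v_i for k = 1, 2. Then t_2 is a zero divisor in the quotient ring ℚ[v_1,...,v_m]/(t_1). In particular (t_1, t_2) is not a regular sequence. -/
/-!
With `p = ∏_{i ∈ V₁ \ V₂} vᵢ` one has `p · t₂ = t₁ · ∏_{j ∈ V₂ \ V₁} vⱼ`, both sides being the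
product over `V₁ ∪ V₂`. On the other hand `t₁ ∤ p`: for `k ∈ V₁ ∩ V₂` the variable `v_k` divides
`t₁` but not the monomial `p`. Hence the class of `p` is a nonzero element of `ℚ[v]/(t₁)`
annihilated by `t₂`.
-/

open MvPolynomial

theorem Finset.prod_sdiff_mul_prod_eq_prod_mul_prod_sdiff {ι M : Type*} [CommMonoid M]
    [DecidableEq ι] (s t : Finset ι) (f : ι → M) :
    (∏ i ∈ s \ t, f i) * ∏ i ∈ t, f i = (∏ i ∈ s, f i) * ∏ i ∈ t \ s, f i := by
  rw [← Finset.prod_union Finset.sdiff_disjoint, ← Finset.prod_union Finset.disjoint_sdiff,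
    Finset.sdiff_union_self_eq_union, Finset.union_sdiff_self_eq_union]

theorem MvPolynomial.X_dvd_prod_X_iff {σ R : Type*} [CommSemiring R] [Nontrivial R]
    {k : σ} {s : Finset σ} : (X k : MvPolynomial σ R) ∣ ∏ i ∈ s, X i ↔ k ∈ s := by
  classical
  refine ⟨fun h => ?_, Finset.dvd_prod_of_mem _⟩
  rw [show ∏ i ∈ s, (X i : MvPolynomial σ R) = monomial (∑ i ∈ s, Finsupp.single i 1) 1 from
    (monomial_sum_one s _).symm, X_dvd_monomial] at h
  simpa [Finsupp.finsetSum_apply, Finsupp.single_apply] using h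

theorem Ideal.Quotient.exists_ne_zero_mul_mk_eq_zero {R : Type*} [CommRing R] {a b c : R}
    (hc : ¬ a ∣ c) (hcb : a ∣ c * b) :
    ∃ y : R ⧸ Ideal.span {a}, y ≠ 0 ∧ y * Ideal.Quotient.mk (Ideal.span {a}) b = 0 :=
  ⟨Ideal.Quotient.mk _ c, by rwa [Ne, Ideal.Quotient.eq_zero_iff_dvd],
    by rwa [← map_mul, Ideal.Quotient.eq_zero_iff_dvd]⟩

theorem stmt2_general (m : ℕ) (V1 V2 : Finset (Fin m))
    (hint : (V1 ∩ V2).Nonempty)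
    (t1 t2 : MvPolynomial (Fin m) ℚ)
    (ht1 : t1 = ∏ i ∈ V1, X i) (ht2 : t2 = ∏ i ∈ V2, X i) :
    (∃ y : MvPolynomial (Fin m) ℚ ⧸ Ideal.span {t1},
        y ≠ 0 ∧ y * Ideal.Quotient.mk (Ideal.span {t1}) t2 = 0) ∧
    ¬ (t1 ∈ nonZeroDivisors (MvPolynomial (Fin m) ℚ) ∧
        Ideal.Quotient.mk (Ideal.span {t1}) t2 ∈
          nonZeroDivisors (MvPolynomial (Fin m) ℚ ⧸ Ideal.span {t1})) := by
  obtain ⟨k, hk⟩ := hint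
  rw [Finset.mem_inter] at hk
  have hndvd : ¬ t1 ∣ ∏ i ∈ V1 \ V2, X i := fun h =>
    Finset.notMem_sdiff_of_mem_right hk.2 <|
      X_dvd_prod_X_iff.1 ((ht1 ▸ Finset.dvd_prod_of_mem X hk.1).trans h)
  have hdvd : t1 ∣ (∏ i ∈ V1 \ V2, X i) * t2 :=
    ⟨∏ i ∈ V2 \ V1, X i, by rw [ht1, ht2, Finset.prod_sdiff_mul_prod_eq_prod_mul_prod_sdiff]⟩
  obtain ⟨y, hy0, hyt2⟩ := Ideal.Quotient.exists_ne_zero_mul_mk_eq_zero hndvd hdvd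
  exact ⟨⟨y, hy0, hyt2⟩, fun ⟨_, ht2reg⟩ => hy0 (ht2reg.2 y hyt2)⟩

/-- If `V1, V2 ⊆ {1,…,m}` are distinct, intersect nontrivially, and neither contains the
other, then with `t k = ∏_{i ∈ V k} v_i`, the element `t 2` is a zero divisor in
`ℚ[v_1,…,v_m]/(t 1)`; in particular `(t 1, t 2)` is not a regular sequence. -/
theorem stmt2 (m : ℕ) (V1 V2 : Finset (Fin m)) (hne : V1 ≠ V2)
    (hint : (V1 ∩ V2).Nonempty) (h12 : ¬ V1 ⊆ V2) (h21 : ¬ V2 ⊆ V1)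
    (t1 t2 : MvPolynomial (Fin m) ℚ)
    (ht1 : t1 = ∏ i ∈ V1, X i) (ht2 : t2 = ∏ i ∈ V2, X i) :
    (∃ y : MvPolynomial (Fin m) ℚ ⧸ Ideal.span {t1},
        y ≠ 0 ∧ y * Ideal.Quotient.mk (Ideal.span {t1}) t2 = 0) ∧
    ¬ (t1 ∈ nonZeroDivisors (MvPolynomial (Fin m) ℚ) ∧
        Ideal.Quotient.mk (Ideal.span {t1}) t2 ∈
          nonZeroDivisors (MvPolynomial (Fin m) ℚ ⧸ Ideal.span {t1})) :=
  stmt2_general m V1 V2 hint t1 t2 ht1 ht2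
end

section
/- Let K be a simplicial complex on a finite set V, and suppose the squarefree monomial ideal I_K ⊆ ℚ[v_i : i ∈ V] (the Stanley–Reisner ideal) is generated by monomials corresponding to pairwise disjoint missing faces V_1, ..., V_p. Then the face ring ℚ[K] = ℚ[v_i : i ∈ V]/I_K is a complete intersection ring: I_K is generated by a regular sequence. -/
open MvPolynomial

/-- `K` is an (abstract) simplicial complex on the vertex type `V`. -/
def IsSimplicialComplex {V : Type*} (K : Set (Finset V)) : Prop :=
  ∅ ∈ K ∧ ∀ σ ∈ K, ∀ τ ⊆ σ, τ ∈ K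

/-- `I` is a missing face (minimal non-face) of `K`. -/
def IsMissingFace {V : Type*} (K : Set (Finset V)) (I : Finset V) : Prop :=
  I ∉ K ∧ ∀ J ⊂ I, J ∈ K

/-- The Stanley–Reisner ideal of `K` over `ℚ`, generated by the squarefree monomials
of non-faces of `K`. -/
noncomputable def SRIdeal {V : Type*} [DecidableEq V] (K : Set (Finset V)) : Ideal (MvPolynomial V ℚ) :=
  Ideal.span {x | ∃ J : Finset V, J ∉ K ∧ x = ∏ i ∈ J, X i}

namespace MvPolynomial

variable {σ R : Type*} [CommRing R]

/-- Multiplication by `X^d` is injective modulo monomials `X^s` sharing no variable with it, since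
`X^s ∣ f X^d` then forces `X^s ∣ f` term by term. -/
theorem monomial_mem_nonZeroDivisors_quotient_span_monomial {S : Set (σ →₀ ℕ)} {d : σ →₀ ℕ}
    (hS : ∀ s ∈ S, Disjoint s.support d.support) :
    Ideal.Quotient.mk (Ideal.span ((fun s => monomial s (1 : R)) '' S)) (monomial d 1) ∈
      nonZeroDivisors (MvPolynomial σ R ⧸ Ideal.span ((fun s => monomial s (1 : R)) '' S)) := by
  rw [mem_nonZeroDivisors_iff_right]
  intro x hx
  obtain ⟨f, rfl⟩ := Ideal.Quotient.mk_surjective x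
  rw [← map_mul, Ideal.Quotient.eq_zero_iff_mem, mem_ideal_span_monomial_image] at hx
  rw [Ideal.Quotient.eq_zero_iff_mem, mem_ideal_span_monomial_image]
  intro μ hμ
  have hμd : μ + d ∈ (f * monomial d 1).support := by
    rwa [mem_support_iff, coeff_mul_monomial, mul_one, ← mem_support_iff]
  obtain ⟨s, hs, hle⟩ := hx _ hμd
  refine ⟨s, hs, fun i => ?_⟩
  by_cases hi : i ∈ s.support
  · have hdi : d i = 0 := Finsupp.notMem_support_iff.mp (Finset.disjoint_left.mp (hS s hs) hi)
    simpa [hdi] using hle i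
  · simp [Finsupp.notMem_support_iff.mp hi]

theorem prod_X_eq_monomial_sum_single (s : Finset σ) :
    (∏ i ∈ s, X i : MvPolynomial σ R) = monomial (∑ i ∈ s, Finsupp.single i 1) 1 :=
  (monomial_sum_one s _).symm

end MvPolynomial

theorem Finsupp.support_sum_single_one {σ : Type*} (s : Finset σ) :
    (∑ i ∈ s, Finsupp.single i 1 : σ →₀ ℕ).support = s := by
  classical
  ext i
  simp [Finsupp.finsetSum_apply, Finsupp.single_apply]

theorem stmt3_general {V : Type*} [DecidableEq V]
    (K : Set (Finset V))
    (p : ℕ) (W : Fin p → Finset V)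
    (hdisj : ∀ k l, k ≠ l → Disjoint (W k) (W l))
    (hgen : SRIdeal K = Ideal.span (Set.range fun k => ∏ i ∈ W k, (X i : MvPolynomial V ℚ))) :
    ∃ (q : ℕ) (t : Fin q → MvPolynomial V ℚ),
      (∀ k : Fin q,
        Ideal.Quotient.mk (Ideal.span (t '' {j | j < k})) (t k) ∈
          nonZeroDivisors (MvPolynomial V ℚ ⧸ Ideal.span (t '' {j | j < k}))) ∧
      Ideal.span (Set.range t) = SRIdeal K := by
  refine ⟨p, fun k => ∏ i ∈ W k, X i, fun k => ?_, hgen.symm⟩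
  have hmono : (fun k => ∏ i ∈ W k, (X i : MvPolynomial V ℚ)) =
      (fun s => monomial s 1) ∘ fun k => ∑ i ∈ W k, Finsupp.single i 1 :=
    funext fun k => prod_X_eq_monomial_sum_single (W k)
  rw [hmono, Set.image_comp]
  refine monomial_mem_nonZeroDivisors_quotient_span_monomial ?_
  rintro _ ⟨j, hj, rfl⟩
  simpa only [Finsupp.support_sum_single_one] using hdisj j k (ne_of_lt hj)

/-- If the Stanley–Reisner ideal of `K` is generated by the monomials of pairwise disjoint
missing faces `W 1, …, W p`, then `ℚ[K]` is a complete intersection ring: the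
Stanley–Reisner ideal is generated by a regular sequence. -/
theorem stmt3 {V : Type*} [Fintype V] [DecidableEq V]
    (K : Set (Finset V)) (hK : IsSimplicialComplex K)
    (p : ℕ) (W : Fin p → Finset V)
    (hmf : ∀ k, IsMissingFace K (W k))
    (hdisj : ∀ k l, k ≠ l → Disjoint (W k) (W l))
    (hgen : SRIdeal K = Ideal.span (Set.range fun k => ∏ i ∈ W k, (X i : MvPolynomial V ℚ))) :
    ∃ (q : ℕ) (t : Fin q → MvPolynomial V ℚ),
      (∀ k : Fin q,
        Ideal.Quotient.mk (Ideal.span (t '' {j | j < k})) (t k) ∈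
          nonZeroDivisors (MvPolynomial V ℚ ⧸ Ideal.span (t '' {j | j < k}))) ∧
      Ideal.span (Set.range t) = SRIdeal K :=
  stmt3_general K p W hdisj hgen
end

section
/- Let G be a simple graph, viewed as a one-dimensional simplicial complex K on its vertex set V, such that there do not exist two missing faces (minimal non-faces) I_1, I_2 of K with |I_1 \ I_2| = 1, and such that K contains no induced cycle of length ≥ 5. Then K is one of: the boundary of a 2-simplex (3-cycle), the join of two copies of ∂Δ¹ (4-cycle), ∂Δ¹ (two isolated vertices), Δ¹ (an edge), ∂Δ¹ * Δ⁰ (the cone over two points, i.e. a path of length 2), or Δ⁰ (a single vertex). -/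
/-- The one-dimensional simplicial complex associated with a simple graph: faces are
`∅`, the singletons, and the edges. -/
def graphComplex {V : Type*} [DecidableEq V] (G : SimpleGraph V) : Set (Finset V) :=
  {σ | σ.card ≤ 1 ∨ ∃ i j, G.Adj i j ∧ σ = {i, j}}

section helpers
variable {V : Type*} [DecidableEq V] {G : SimpleGraph V}

lemma nonedge_missing {a b : V} (hne : a ≠ b) (h : ¬ G.Adj a b) :
    IsMissingFace (graphComplex G) {a, b} := by
  constructor
  · rintro (hc | ⟨i, j, hij, he⟩)
    · simp [Finset.card_pair hne] at hc
    · have ha : a ∈ ({i, j} : Finset V) := he ▸ (by simp)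
      have hb : b ∈ ({i, j} : Finset V) := he ▸ (by simp)
      simp only [Finset.mem_insert, Finset.mem_singleton] at ha hb
      rcases ha with rfl | rfl <;> rcases hb with rfl | rfl <;>
        first | exact hne rfl | exact h hij | exact h hij.symm
  · intro J hJ
    left
    have := Finset.card_lt_card hJ
    rw [Finset.card_pair hne] at this
    omega

lemma triangle_missing {a b c : V} (hab : a ≠ b) (hac : a ≠ c) (hbc : b ≠ c)
    (h1 : G.Adj a b) (h2 : G.Adj a c) (h3 : G.Adj b c) :
    IsMissingFace (graphComplex G) {a, b, c} := by
  have hcard : ({a, b, c} : Finset V).card = 3 := by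
    rw [Finset.card_insert_of_notMem (by simp [hab, hac]), Finset.card_pair hbc]
  constructor
  · rintro (hc | ⟨i, j, hij, he⟩)
    · omega
    · have : ({i, j} : Finset V).card ≤ 2 := Finset.card_insert_le _ _ |>.trans (by simp)
      rw [← he, hcard] at this; omega
  · intro J hJ
    have hle : J.card ≤ 2 := by have := Finset.card_lt_card hJ; omega
    rcases Nat.lt_or_ge J.card 2 with hlt | hge
    · left; omega
    · have h2' : J.card = 2 := le_antisymm hle hge
      obtain ⟨x, y, hxy, rfl⟩ := Finset.card_eq_two.mp h2'
      right
      have hsub := hJ.subset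
      have hx : x ∈ ({a, b, c} : Finset V) := hsub (by simp)
      have hy : y ∈ ({a, b, c} : Finset V) := hsub (by simp)
      simp only [Finset.mem_insert, Finset.mem_singleton] at hx hy
      rcases hx with rfl | rfl | rfl <;> rcases hy with rfl | rfl | rfl <;>
        first
        | exact absurd rfl hxy
        | exact ⟨x, y, by assumption, rfl⟩
        | exact ⟨y, x, by assumption, by rw [Finset.pair_comm]⟩

lemma path3_iso {a b c : V}
    (hab : G.Adj a b) (hbc : G.Adj b c) (hac : ¬ G.Adj a c) (hne : a ≠ c)
    (hcover : ∀ x : V, x = a ∨ x = b ∨ x = c) :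
    Nonempty (G ≃g SimpleGraph.pathGraph 3) := by
  have h1 : a ≠ b := hab.ne
  have h2 : b ≠ c := hbc.ne
  have hca : ¬ G.Adj c a := fun h => hac h.symm
  refine ⟨SimpleGraph.Iso.symm
    { toEquiv := ⟨![a, b, c],
        (fun x => if x = a then 0 else if x = b then 1 else 2), ?_, ?_⟩,
      map_rel_iff' := ?_ }⟩
  · intro i
    fin_cases i <;> simp [h1.symm, hne.symm, h2.symm]
  · intro x
    rcases hcover x with rfl | rfl | rfl <;> simp [h1.symm, hne.symm, h2.symm]
  · intro i j
    fin_cases i <;> fin_cases j <;>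
      simp [SimpleGraph.pathGraph_adj, hab, hbc, hac, hca, hab.symm, hbc.symm]

lemma cyc4_iso {a b c d : V}
    (hab : G.Adj a b) (hbc : G.Adj b c) (hcd : G.Adj c d) (hda : G.Adj d a)
    (hac : ¬ G.Adj a c) (hbd : ¬ G.Adj b d) (hacne : a ≠ c) (hbdne : b ≠ d)
    (hcover : ∀ x : V, x = a ∨ x = b ∨ x = c ∨ x = d) :
    Nonempty (G ≃g SimpleGraph.cycleGraph 4) := by
  have h1 : a ≠ b := hab.ne
  have h2 : b ≠ c := hbc.ne
  have h3 : c ≠ d := hcd.ne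
  have h4 : d ≠ a := hda.ne
  have hca : ¬ G.Adj c a := fun h => hac h.symm
  have hdb : ¬ G.Adj d b := fun h => hbd h.symm
  refine ⟨SimpleGraph.Iso.symm
    { toEquiv := ⟨![a, b, c, d],
        (fun x => if x = a then 0 else if x = b then 1 else if x = c then 2 else 3), ?_, ?_⟩,
      map_rel_iff' := ?_ }⟩
  · intro i
    fin_cases i <;> simp [h1.symm, h2.symm, h3.symm, h4, hacne.symm, hbdne.symm]
  · intro x
    rcases hcover x with rfl | rfl | rfl | rfl <;>
      simp [h1.symm, h2.symm, h3.symm, h4, hacne.symm, hbdne.symm]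
  · intro i j
    fin_cases i <;> fin_cases j <;>
      simp [hab, hbc, hcd, hda, hac, hbd, hca, hdb, hab.symm, hbc.symm, hcd.symm, hda.symm] <;>
      decide

lemma top3_iso {a b c : V}
    (hab : G.Adj a b) (hac : G.Adj a c) (hbc : G.Adj b c)
    (hcover : ∀ x : V, x = a ∨ x = b ∨ x = c) :
    Nonempty (G ≃g SimpleGraph.cycleGraph 3) := by
  rw [SimpleGraph.cycleGraph_three_eq_top]
  have h1 : a ≠ b := hab.ne
  have h2 : a ≠ c := hac.ne
  have h3 : b ≠ c := hbc.ne
  refine ⟨SimpleGraph.Iso.symm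
    { toEquiv := ⟨![a, b, c],
        (fun x => if x = a then 0 else if x = b then 1 else 2), ?_, ?_⟩,
      map_rel_iff' := ?_ }⟩
  · intro i
    fin_cases i <;> simp [h1.symm, h2.symm, h3.symm]
  · intro x
    rcases hcover x with rfl | rfl | rfl <;> simp [h1.symm, h2.symm, h3.symm]
  · intro i j
    fin_cases i <;> fin_cases j <;>
      simp [hab, hac, hbc, hab.symm, hac.symm, hbc.symm, h1, h2, h3, h1.symm, h2.symm, h3.symm]

lemma two_iso_top {a b : V} (hab : G.Adj a b)
    (hcover : ∀ x : V, x = a ∨ x = b) :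
    Nonempty (G ≃g (⊤ : SimpleGraph (Fin 2))) := by
  have h1 : a ≠ b := hab.ne
  refine ⟨SimpleGraph.Iso.symm
    { toEquiv := ⟨![a, b], (fun x => if x = a then 0 else 1), ?_, ?_⟩,
      map_rel_iff' := ?_ }⟩
  · intro i; fin_cases i <;> simp [h1.symm]
  · intro x; rcases hcover x with rfl | rfl <;> simp [h1.symm]
  · intro i j
    fin_cases i <;> fin_cases j <;> simp [hab, hab.symm, h1, h1.symm]

lemma two_iso_bot {a b : V} (hne : a ≠ b) (hab : ¬ G.Adj a b)
    (hcover : ∀ x : V, x = a ∨ x = b) :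
    Nonempty (G ≃g (⊥ : SimpleGraph (Fin 2))) := by
  have hba : ¬ G.Adj b a := fun h => hab h.symm
  refine ⟨SimpleGraph.Iso.symm
    { toEquiv := ⟨![a, b], (fun x => if x = a then 0 else 1), ?_, ?_⟩,
      map_rel_iff' := ?_ }⟩
  · intro i; fin_cases i <;> simp [hne.symm]
  · intro x; rcases hcover x with rfl | rfl <;> simp [hne.symm]
  · intro i j
    fin_cases i <;> fin_cases j <;> simp [hab, hba]

end helpers

/-- Let `G` be a simple graph (viewed as a one-dimensional simplicial complex) such that
there are no two missing faces `I₁, I₂` with `|I₁ \ I₂| = 1` and no induced cycle of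
length `≥ 5`.  Then `G` is one of: the 3-cycle `∂Δ²`, the 4-cycle `∂Δ¹ * ∂Δ¹`,
two isolated vertices `∂Δ¹`, a single edge `Δ¹`, a path on three vertices `∂Δ¹ * Δ⁰`,
or a single vertex `Δ⁰`. -/
theorem stmt7 {V : Type*} [Fintype V] [DecidableEq V] [Nonempty V]
    (G : SimpleGraph V)
    (hmf : ¬ ∃ I₁ I₂ : Finset V, IsMissingFace (graphComplex G) I₁ ∧
      IsMissingFace (graphComplex G) I₂ ∧ (I₁ \ I₂).card = 1)
    (hcyc : ¬ ∃ n : ℕ, 5 ≤ n ∧ ∃ s : Set V,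
      Nonempty (G.induce s ≃g SimpleGraph.cycleGraph n)) :
    Nonempty (G ≃g SimpleGraph.cycleGraph 3) ∨
    Nonempty (G ≃g SimpleGraph.cycleGraph 4) ∨
    Nonempty (G ≃g (⊥ : SimpleGraph (Fin 2))) ∨
    Nonempty (G ≃g (⊤ : SimpleGraph (Fin 2))) ∨
    Nonempty (G ≃g SimpleGraph.pathGraph 3) ∨
    Nonempty (G ≃g (⊥ : SimpleGraph (Fin 1))) := by
  classical
  -- Each vertex has at most one non-neighbor.
  have huniq : ∀ a b c : V, a ≠ b → a ≠ c → ¬ G.Adj a b → ¬ G.Adj a c → b = c := by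
    intro a b c hab hac h1 h2
    by_contra hbc
    apply hmf
    refine ⟨{a, b}, {a, c}, nonedge_missing hab h1, nonedge_missing hac h2, ?_⟩
    have : ({a, b} : Finset V) \ {a, c} = {b} := by
      ext x
      simp only [Finset.mem_sdiff, Finset.mem_insert, Finset.mem_singleton]
      constructor
      · rintro ⟨rfl | rfl, hx⟩
        · exact absurd (Or.inl rfl) hx
        · rfl
      · rintro rfl
        refine ⟨Or.inr rfl, ?_⟩
        rintro (rfl | rfl)
        exacts [hab rfl, hbc rfl]
    rw [this, Finset.card_singleton]
  by_cases htri : ∃ a b c : V, G.Adj a b ∧ G.Adj a c ∧ G.Adj b c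
  · -- triangle case: G ≅ C₃
    obtain ⟨a, b, c, h1, h2, h3⟩ := htri
    have hab : a ≠ b := h1.ne
    have hac : a ≠ c := h2.ne
    have hbc : b ≠ c := h3.ne
    have hcover : ∀ x : V, x = a ∨ x = b ∨ x = c := by
      intro x
      by_contra hx
      push_neg at hx
      obtain ⟨hxa, hxb, hxc⟩ := hx
      have hadj : ∀ y : V, (y = a ∨ y = b ∨ y = c) → G.Adj x y := by
        rintro y hy
        by_contra hxy
        apply hmf
        have hxyne : x ≠ y := by rcases hy with rfl | rfl | rfl <;> assumption
        refine ⟨{x, y}, {a, b, c}, nonedge_missing hxyne hxy,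
          triangle_missing hab hac hbc h1 h2 h3, ?_⟩
        have : ({x, y} : Finset V) \ {a, b, c} = {x} := by
          ext z
          simp only [Finset.mem_sdiff, Finset.mem_insert, Finset.mem_singleton]
          constructor
          · rintro ⟨rfl | rfl, hz⟩
            · rfl
            · exfalso; rcases hy with rfl | rfl | rfl <;> simp at hz
          · rintro rfl
            refine ⟨Or.inl rfl, ?_⟩
            rintro (rfl | rfl | rfl)
            exacts [hxa rfl, hxb rfl, hxc rfl]
        rw [this, Finset.card_singleton]
      have hxa' := hadj a (Or.inl rfl)
      have hxb' := hadj b (Or.inr (Or.inl rfl))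
      apply hmf
      refine ⟨{a, b, x}, {a, b, c},
        triangle_missing hab (Ne.symm hxa) (Ne.symm hxb) h1 hxa'.symm hxb'.symm,
        triangle_missing hab hac hbc h1 h2 h3, ?_⟩
      have : ({a, b, x} : Finset V) \ {a, b, c} = {x} := by
        ext z
        simp only [Finset.mem_sdiff, Finset.mem_insert, Finset.mem_singleton]
        constructor
        · rintro ⟨rfl | rfl | rfl, hz⟩
          · simp at hz
          · simp at hz
          · rfl
        · rintro rfl
          refine ⟨Or.inr (Or.inr rfl), ?_⟩
          rintro (rfl | rfl | rfl)
          exacts [hxa rfl, hxb rfl, hxc rfl]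
      rw [this, Finset.card_singleton]
    exact Or.inl (top3_iso h1 h2 h3 hcover)
  · -- triangle-free case
    push_neg at htri
    have hfree : ∀ a b c : V, G.Adj a b → G.Adj a c → ¬ G.Adj b c := fun a b c h1 h2 =>
      htri a b c h1 h2
    have hcard : Fintype.card V ≤ 4 := by
      by_contra hc
      push_neg at hc
      obtain ⟨a⟩ := (inferInstance : Nonempty V)
      set t := Finset.univ.filter (fun x => G.Adj a x) with ht
      have htcard : 3 ≤ t.card := by
        by_contra htc
        push_neg at htc
        have hsub : ∀ x ∈ (Finset.univ.erase a) \ t, ∀ y ∈ (Finset.univ.erase a) \ t, x = y := by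
          intro x hx y hy
          simp only [Finset.mem_sdiff, Finset.mem_erase, Finset.mem_filter, Finset.mem_univ,
            true_and, not_and, ht] at hx hy
          exact huniq a x y (Ne.symm hx.1.1) (Ne.symm hy.1.1) hx.2 hy.2
        have h1 : ((Finset.univ.erase a) \ t).card ≤ 1 := Finset.card_le_one.mpr
          (fun x hx y hy => hsub x hx y hy)
        have h2 : (Finset.univ.erase a).card = Fintype.card V - 1 := by
          rw [Finset.card_erase_of_mem (Finset.mem_univ a), Finset.card_univ]
        have h3 := Finset.card_sdiff_add_card_inter (Finset.univ.erase a) t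
        have h4 : ((Finset.univ.erase a) ∩ t).card ≤ t.card :=
          Finset.card_le_card Finset.inter_subset_right
        omega
      obtain ⟨s, hs, hs3⟩ := Finset.exists_subset_card_eq htcard
      obtain ⟨b, c, d, hbc, hbd, hcd, rfl⟩ := Finset.card_eq_three.mp hs3
      have hb : G.Adj a b := (Finset.mem_filter.mp (hs (by simp))).2
      have hcadj : G.Adj a c := (Finset.mem_filter.mp (hs (by simp))).2
      have hd : G.Adj a d := (Finset.mem_filter.mp (hs (by simp))).2
      exact hcd (huniq b c d hbc hbd (hfree a b c hb hcadj) (hfree a b d hb hd))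
    have hpos : 1 ≤ Fintype.card V := Fintype.card_pos
    rcases (by omega : Fintype.card V = 1 ∨ Fintype.card V = 2 ∨ Fintype.card V = 3 ∨
      Fintype.card V = 4) with h | h | h | h
    · -- card 1
      right; right; right; right; right
      have hss : Subsingleton V := Fintype.card_le_one_iff_subsingleton.mp (by omega)
      refine ⟨{ toEquiv := Fintype.equivFinOfCardEq h, map_rel_iff' := ?_ }⟩
      intro x y
      simp only [SimpleGraph.bot_adj, false_iff]
      intro hxy
      exact G.irrefl ((Subsingleton.elim x y) ▸ hxy)
    · -- card 2
      obtain ⟨a, b, hab, huniv⟩ := Finset.card_eq_two.mp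
        (show (Finset.univ : Finset V).card = 2 by rw [Finset.card_univ, h])
      have hcover : ∀ x : V, x = a ∨ x = b := by
        intro x
        have : x ∈ (Finset.univ : Finset V) := Finset.mem_univ x
        rw [huniv] at this
        simpa using this
      by_cases hadj : G.Adj a b
      · exact Or.inr (Or.inr (Or.inr (Or.inl (two_iso_top hadj hcover))))
      · exact Or.inr (Or.inr (Or.inl (two_iso_bot hab hadj hcover)))
    · -- card 3
      obtain ⟨a, b, c, hab, hac, hbc, huniv⟩ := Finset.card_eq_three.mp
        (show (Finset.univ : Finset V).card = 3 by rw [Finset.card_univ, h])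
      have hcover : ∀ x : V, x = a ∨ x = b ∨ x = c := by
        intro x
        have : x ∈ (Finset.univ : Finset V) := Finset.mem_univ x
        rw [huniv] at this
        simpa using this
      -- helper: if x-z non-adjacent (x,y,z a permutation), get a path
      have key : ∀ x y z : V, x ≠ y → x ≠ z → y ≠ z →
          (∀ v : V, v = x ∨ v = y ∨ v = z) → ¬ G.Adj x z →
          Nonempty (G ≃g SimpleGraph.pathGraph 3) := by
        intro x y z hxy hxz hyz hcov hnadj
        have haxy : G.Adj x y := by
          by_contra hn
          exact hyz (huniq x y z hxy hxz hn hnadj)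
        have hayz : G.Adj y z := by
          by_contra hn
          have hzy : ¬ G.Adj z y := fun hh => hn hh.symm
          have hzx : ¬ G.Adj z x := fun hh => hnadj hh.symm
          exact hxy (huniq z x y (Ne.symm hxz) (Ne.symm hyz) hzx hzy)
        exact path3_iso haxy hayz hnadj hxz hcov
      by_cases e1 : G.Adj a b
      · by_cases e2 : G.Adj a c
        · by_cases e3 : G.Adj b c
          · exact absurd e3 (hfree a b c e1 e2)
          · -- b-c nonadjacent: path b-a-c
            refine Or.inr (Or.inr (Or.inr (Or.inr (Or.inl (key b a c (Ne.symm hab) hbc hac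
              (fun v => by rcases hcover v with rfl | rfl | rfl <;> tauto) e3)))))
        · refine Or.inr (Or.inr (Or.inr (Or.inr (Or.inl (key a b c hab hac hbc hcover e2)))))
      · refine Or.inr (Or.inr (Or.inr (Or.inr (Or.inl (key a c b hac hab (Ne.symm hbc)
          (fun v => by rcases hcover v with rfl | rfl | rfl <;> tauto) e1)))))
    · -- card 4
      obtain ⟨a⟩ := (inferInstance : Nonempty V)
      have he3 : (Finset.univ.erase a).card = 3 := by
        rw [Finset.card_erase_of_mem (Finset.mem_univ a), Finset.card_univ, h]
      obtain ⟨x, y, z, hxy, hxz, hyz, herase⟩ := Finset.card_eq_three.mp he3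
      have hax : x ≠ a := (Finset.mem_erase.mp (herase ▸ (by simp : x ∈ ({x,y,z} : Finset V)) : x ∈ Finset.univ.erase a)).1
      have hay : y ≠ a := (Finset.mem_erase.mp (herase ▸ (by simp : y ∈ ({x,y,z} : Finset V)) : y ∈ Finset.univ.erase a)).1
      have haz : z ≠ a := (Finset.mem_erase.mp (herase ▸ (by simp : z ∈ ({x,y,z} : Finset V)) : z ∈ Finset.univ.erase a)).1
      have hcover : ∀ v : V, v = a ∨ v = x ∨ v = y ∨ v = z := by
        intro v
        by_cases hva : v = a
        · exact Or.inl hva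
        · right
          have : v ∈ Finset.univ.erase a := Finset.mem_erase.mpr ⟨hva, Finset.mem_univ v⟩
          rw [herase] at this
          simpa using this
      -- key: given a's unique non-neighbor c and other two b, d, build C4 a-b-c-d
      have key : ∀ b c d : V, a ≠ b → a ≠ c → a ≠ d → b ≠ c → b ≠ d → c ≠ d →
          (∀ v : V, v = a ∨ v = b ∨ v = c ∨ v = d) → ¬ G.Adj a c →
          Nonempty (G ≃g SimpleGraph.cycleGraph 4) := by
        intro b c d h1 h2 h3 h4 h5 h6 hcov hnac
        have hca : ¬ G.Adj c a := fun hh => hnac hh.symm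
        have hab' : G.Adj a b := by
          by_contra hn
          exact h4 (huniq a b c h1 h2 hn hnac)
        have had : G.Adj a d := by
          by_contra hn
          exact h6 (huniq a c d h2 h3 hnac hn)
        have hcb : G.Adj c b := by
          by_contra hn
          exact h1 (huniq c a b (Ne.symm h2) (Ne.symm h4) hca hn)
        have hcd : G.Adj c d := by
          by_contra hn
          exact h3 (huniq c a d (Ne.symm h2) h6 hca hn)
        have hnbd : ¬ G.Adj b d := hfree a b d hab' had
        exact cyc4_iso hab' hcb.symm hcd had.symm hnac hnbd h2 h5 hcov
      -- find a's non-neighbor among x, y, z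
      by_cases e1 : G.Adj a x
      · by_cases e2 : G.Adj a y
        · by_cases e3 : G.Adj a z
          · exact absurd (huniq x y z hxy hxz (hfree a x y e1 e2) (hfree a x z e1 e3)) hyz
          · exact Or.inr (Or.inl (key x z y (Ne.symm hax) (Ne.symm haz) (Ne.symm hay)
              hxz hxy (Ne.symm hyz)
              (fun v => by rcases hcover v with rfl | rfl | rfl | rfl <;> tauto) e3))
        · exact Or.inr (Or.inl (key x y z (Ne.symm hax) (Ne.symm hay) (Ne.symm haz)
            hxy hxz hyz hcover e2))
      · exact Or.inr (Or.inl (key y x z (Ne.symm hay) (Ne.symm hax) (Ne.symm haz)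
          (Ne.symm hxy) hyz hxz
          (fun v => by rcases hcover v with rfl | rfl | rfl | rfl <;> tauto) e1))
end

section
/- Let G be a simple graph that contains a 3-cycle and has at least 4 vertices and is connected on those vertices containing the triangle. Then G has an induced subgraph on 4 vertices containing a triangle, and for any such induced subgraph H (one of: triangle plus isolated vertex is excluded since we take 4 connected vertices; triangle with pendant edge, diamond, or K_4) there exist two missing faces I_1, I_2 of the 1-dimensional simplicial complex determined by H with |I_1 \ I_2| = 1. -/
/-- A graph `H` contains a triangle. -/
def HasTriangle {W : Type*} (H : SimpleGraph W) : Prop :=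
  ∃ a b c : W, H.Adj a b ∧ H.Adj b c ∧ H.Adj a c

lemma mf_nonedge {W : Type*} [DecidableEq W] (H : SimpleGraph W) {x y : W}
    (hxy : x ≠ y) (h : ¬H.Adj x y) : IsMissingFace (graphComplex H) {x, y} := by
  constructor
  · rintro (hc | ⟨i, j, hij, he⟩)
    · simp [Finset.card_pair hxy] at hc
    · have : (x = i ∧ y = j) ∨ (x = j ∧ y = i) := by
        have hx : x ∈ ({i, j} : Finset W) := he ▸ by simp
        have hy : y ∈ ({i, j} : Finset W) := he ▸ by simp
        simp at hx hy
        rcases hx with rfl | rfl <;> rcases hy with rfl | rfl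
        · exact absurd rfl hxy
        · exact Or.inl ⟨rfl, rfl⟩
        · exact Or.inr ⟨rfl, rfl⟩
        · exact absurd rfl hxy
      rcases this with ⟨rfl, rfl⟩ | ⟨rfl, rfl⟩
      · exact h hij
      · exact h hij.symm
  · intro J hJ
    left
    have := Finset.card_lt_card hJ
    rw [Finset.card_pair hxy] at this
    omega

lemma mf_triangle {W : Type*} [DecidableEq W] (H : SimpleGraph W) {a b c : W}
    (hab : H.Adj a b) (hbc : H.Adj b c) (hac : H.Adj a c) :
    IsMissingFace (graphComplex H) {a, b, c} := by
  have hab' := hab.ne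
  have hbc' := hbc.ne
  have hac' := hac.ne
  have hcard : ({a, b, c} : Finset W).card = 3 := by
    rw [Finset.card_insert_of_notMem (by simp [hab', hac']),
      Finset.card_pair hbc']
  constructor
  · rintro (hc | ⟨i, j, hij, he⟩)
    · omega
    · have h2 : ({i, j} : Finset W).card ≤ 2 :=
        (Finset.card_insert_le _ _).trans (by simp)
      rw [he] at hcard; omega
  · intro J hJ
    have hle : J.card ≤ 2 := by have := Finset.card_lt_card hJ; omega
    rcases Nat.lt_or_ge J.card 2 with h2 | h2
    · left; omega
    · have : J.card = 2 := le_antisymm hle h2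
      obtain ⟨x, y, hxy, rfl⟩ := Finset.card_eq_two.mp this
      right
      have hx : x ∈ ({a,b,c} : Finset W) := hJ.1 (by simp)
      have hy : y ∈ ({a,b,c} : Finset W) := hJ.1 (by simp)
      simp at hx hy
      rcases hx with rfl | rfl | rfl <;> rcases hy with rfl | rfl | rfl <;>
        first
          | exact absurd rfl hxy
          | exact ⟨x, y, by assumption, rfl⟩
          | exact ⟨x, y, SimpleGraph.Adj.symm (by assumption), rfl⟩

lemma card_three_le {W : Type*} [DecidableEq W] (a b c : W) :
    ({a, b, c} : Finset W).card ≤ 3 :=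
  (Finset.card_insert_le _ _).trans (Nat.add_le_add_right
    ((Finset.card_insert_le _ _).trans (by simp)) 1)

lemma part2 {W : Type*} [DecidableEq W] [Fintype W] (H : SimpleGraph W)
    (hW : Fintype.card W = 4) (ht : HasTriangle H) :
    ∃ I₁ I₂ : Finset W, IsMissingFace (graphComplex H) I₁ ∧
      IsMissingFace (graphComplex H) I₂ ∧ (I₁ \ I₂).card = 1 := by
  obtain ⟨a, b, c, hab, hbc, hac⟩ := ht
  obtain ⟨d, hd⟩ : ∃ d, d ∉ ({a, b, c} : Finset W) := by
    by_contra h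
    push_neg at h
    have hsub : (Finset.univ : Finset W) ⊆ {a, b, c} := fun x _ => h x
    have := Finset.card_le_card hsub
    rw [Finset.card_univ, hW] at this
    have := card_three_le a b c
    omega
  simp at hd
  obtain ⟨hda, hdb, hdc⟩ := hd
  have key : ∀ x : W, x ∈ ({a, b, c} : Finset W) → ¬H.Adj x d →
      ∃ I₁ I₂ : Finset W, IsMissingFace (graphComplex H) I₁ ∧
        IsMissingFace (graphComplex H) I₂ ∧ (I₁ \ I₂).card = 1 := by
    intro x hx hnadj
    have hxd : x ≠ d := by
      simp at hx; rcases hx with rfl | rfl | rfl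
      · exact fun h => hda h.symm
      · exact fun h => hdb h.symm
      · exact fun h => hdc h.symm
    refine ⟨{x, d}, {a, b, c}, mf_nonedge H hxd hnadj, mf_triangle H hab hbc hac, ?_⟩
    have : ({x, d} \ {a, b, c} : Finset W) = {d} := by
      ext u
      simp only [Finset.mem_sdiff, Finset.mem_insert, Finset.mem_singleton] at *
      constructor
      · rintro ⟨rfl | rfl, h2⟩
        · exact absurd hx h2
        · rfl
      · rintro rfl
        exact ⟨Or.inr rfl, by tauto⟩
    rw [this, Finset.card_singleton]
  by_cases h1 : ¬H.Adj a d
  · exact key a (by simp) h1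
  by_cases h2 : ¬H.Adj b d
  · exact key b (by simp) h2
  by_cases h3 : ¬H.Adj c d
  · exact key c (by simp) h3
  push_neg at h1 h2 h3
  refine ⟨{a, b, d}, {a, b, c}, mf_triangle H hab h2 h1, mf_triangle H hab hbc hac, ?_⟩
  have : ({a, b, d} \ {a, b, c} : Finset W) = {d} := by
    ext u
    simp only [Finset.mem_sdiff, Finset.mem_insert, Finset.mem_singleton] at *
    constructor
    · rintro ⟨rfl | rfl | rfl, h2⟩
      · exact absurd (Or.inl rfl) h2
      · exact absurd (Or.inr (Or.inl rfl)) h2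
      · rfl
    · rintro rfl
      exact ⟨Or.inr (Or.inr rfl), by tauto⟩
  rw [this, Finset.card_singleton]

/-- Let `G` be a connected graph on at least 4 vertices containing a 3-cycle.  Then `G`
has a connected induced subgraph on 4 vertices containing a triangle; and for every
connected induced subgraph `H` on 4 vertices containing a triangle (triangle with a
pendant edge, diamond, or `K₄`), the one-dimensional simplicial complex of `H` has two
missing faces `I₁, I₂` with `|I₁ \ I₂| = 1`. -/
theorem stmt9 {V : Type*} [Fintype V] [DecidableEq V]
    (G : SimpleGraph V) (hconn : G.Connected) (htri : HasTriangle G)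
    (hcard : 4 ≤ Fintype.card V) :
    (∃ s : Finset V, s.card = 4 ∧ (G.induce (s : Set V)).Connected ∧
        HasTriangle (G.induce (s : Set V))) ∧
    (∀ s : Finset V, s.card = 4 → (G.induce (s : Set V)).Connected →
      HasTriangle (G.induce (s : Set V)) →
      ∃ I₁ I₂ : Finset (s : Set V),
        IsMissingFace (graphComplex (G.induce (s : Set V))) I₁ ∧
        IsMissingFace (graphComplex (G.induce (s : Set V))) I₂ ∧
        (I₁ \ I₂).card = 1) := by
  constructor
  · obtain ⟨a, b, c, hab, hbc, hac⟩ := htri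
    obtain ⟨v, hv⟩ : ∃ v, v ∉ ({a, b, c} : Finset V) := by
      by_contra h
      push_neg at h
      have hsub : (Finset.univ : Finset V) ⊆ {a, b, c} := fun x _ => h x
      have := Finset.card_le_card hsub
      rw [Finset.card_univ] at this
      have := card_three_le a b c
      omega
    obtain ⟨D, _, hD1, hD2⟩ := ((hconn a v).some).exists_boundary_dart
      (↑({a, b, c} : Finset V) : Set V) (by simp) (by simpa using hv)
    set x := D.fst with hxdef
    set d := D.snd with hddef
    have hadj : G.Adj x d := D.adj
    have hxT : x ∈ ({a, b, c} : Finset V) := by simpa using hD1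
    have hdT : d ∉ ({a, b, c} : Finset V) := by simpa using hD2
    simp only [Finset.mem_insert, Finset.mem_singleton, not_or] at hdT
    obtain ⟨hda, hdb, hdc⟩ := hdT
    have had : a ≠ d := fun h => hda h.symm
    have hbd : b ≠ d := fun h => hdb h.symm
    have hcd : c ≠ d := fun h => hdc h.symm
    refine ⟨{a, b, c, d}, ?_, ?_, ?_⟩
    · rw [Finset.card_insert_of_notMem (by simp [hab.ne, hac.ne, had]),
        Finset.card_insert_of_notMem (by simp [hbc.ne, hbd]),
        Finset.card_pair hcd]
    · have ha : a ∈ (↑({a,b,c,d} : Finset V) : Set V) := by simp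
      have hb : b ∈ (↑({a,b,c,d} : Finset V) : Set V) := by simp
      have hc : c ∈ (↑({a,b,c,d} : Finset V) : Set V) := by simp
      have hdm : d ∈ (↑({a,b,c,d} : Finset V) : Set V) := by simp
      rw [SimpleGraph.connected_iff]
      refine ⟨?_, ⟨⟨a, ha⟩⟩⟩
      have reach : ∀ w : (↑({a,b,c,d} : Finset V) : Set V),
          (G.induce (↑({a,b,c,d} : Finset V) : Set V)).Reachable w ⟨a, ha⟩ := by
        rintro ⟨w, hw⟩
        have hw' := hw
        simp only [Finset.coe_insert, Set.mem_insert_iff, Finset.coe_singleton,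
          Set.mem_singleton_iff] at hw'
        rcases hw' with rfl | rfl | rfl | rfl
        · exact SimpleGraph.Reachable.refl _
        · exact SimpleGraph.Adj.reachable (by exact hab.symm)
        · exact SimpleGraph.Adj.reachable (by exact hac.symm)
        · simp only [Finset.mem_insert, Finset.mem_singleton] at hxT
          rcases hxT with rfl | rfl | rfl
          · exact SimpleGraph.Adj.reachable (by exact hadj.symm)
          · exact (SimpleGraph.Adj.reachable (v := ⟨x, hb⟩) (by exact hadj.symm)).trans
              (SimpleGraph.Adj.reachable (by exact hab.symm))
          · exact (SimpleGraph.Adj.reachable (v := ⟨x, hc⟩) (by exact hadj.symm)).trans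
              (SimpleGraph.Adj.reachable (by exact hac.symm))
      intro u v
      exact (reach u).trans (reach v).symm
    · exact ⟨⟨a, by simp⟩, ⟨b, by simp⟩, ⟨c, by simp⟩, hab, hbc, hac⟩
  · intro s hs4 _ ht
    exact part2 _ (by simp [hs4]) ht
end
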